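/- arXiv:1611.02867 — 2 statements merged into one kernel-verified Lean document; each statement's English description precedes it below -/
import Mathlib

section
/- Let A_0, ..., A_{n-1} be finite idempotent algebras of a common signature sharing a common Taylor term, and suppose there exists k with 0 < k < n such that A_i is abelian for all i < k and A_i has a sink s_i ∈ A_i for all i ≥ k. If R ≤_sd A_0 × ... × A_{n-1} is a subdirect product, then Proj_{{0,...,k-1}} R × {s_k} × {s_{k+1}} × ... × {s_{n-1}} ⊆ R. -/
/-- A (functional) signature: a type of operation symbols, each with an arity. -/
structure Signature where
  ops : Type
  arity : ops → ℕ

/-- Terms of a signature in `n` variables. -/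
inductive UTerm (σ : Signature) : ℕ → Type
  | var : ∀ {n}, Fin n → UTerm σ n
  | app : ∀ {n} (f : σ.ops), (Fin (σ.arity f) → UTerm σ n) → UTerm σ n

/-- An algebra of signature `σ` on carrier `A`. -/
structure UAlgebra (σ : Signature) (A : Type) where
  interp : ∀ f : σ.ops, (Fin (σ.arity f) → A) → A

namespace UAlgebra

variable {σ : Signature} {A : Type}

/-- The term operation induced by a term. -/
def eval (Alg : UAlgebra σ A) {n : ℕ} : UTerm σ n → (Fin n → A) → A
  | .var i, env => env i
  | .app f ts, env => Alg.interp f fun j => Alg.eval (ts j) env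

/-- An algebra is idempotent if every basic operation satisfies `f(a,…,a) = a`. -/
def Idempotent (Alg : UAlgebra σ A) : Prop :=
  ∀ (f : σ.ops) (a : A), Alg.interp f (fun _ => a) = a

/-- A congruence: an equivalence relation compatible with the basic operations. -/
def IsCong (Alg : UAlgebra σ A) (θ : A → A → Prop) : Prop :=
  (∀ a, θ a a) ∧ (∀ a b, θ a b → θ b a) ∧ (∀ a b c, θ a b → θ b c → θ a c) ∧
  ∀ (f : σ.ops) (x y : Fin (σ.arity f) → A),
    (∀ j, θ (x j) (y j)) → θ (Alg.interp f x) (Alg.interp f y)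

/-- A subuniverse: a subset closed under the basic operations. -/
def IsSubuniv (Alg : UAlgebra σ A) (B : Set A) : Prop :=
  ∀ (f : σ.ops) (x : Fin (σ.arity f) → A), (∀ j, x j ∈ B) → Alg.interp f x ∈ B

/-- A simple algebra: more than one element, and the only congruences are `0` and `1`. -/
def Simple (Alg : UAlgebra σ A) : Prop :=
  (∃ a b : A, a ≠ b) ∧
  ∀ θ : A → A → Prop, Alg.IsCong θ → (∀ a b, θ a b ↔ a = b) ∨ (∀ a b, θ a b)

/-- An abelian algebra: for every `(ℓ+m)`-ary term operation `t` and tuples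
`a b : Aᶩ`, `u v : Aᵐ`, `t(a,u) = t(a,v) ↔ t(b,u) = t(b,v)`. -/
def Abelian (Alg : UAlgebra σ A) : Prop :=
  ∀ (ℓ m : ℕ) (t : UTerm σ (ℓ + m)) (a b : Fin ℓ → A) (u v : Fin m → A),
    (Alg.eval t (Fin.append a u) = Alg.eval t (Fin.append a v) ↔
      Alg.eval t (Fin.append b u) = Alg.eval t (Fin.append b v))

/-- `B` is an absorbing subalgebra of `A` with respect to the `k`-ary term `t`:
`B` is a (nonempty) subuniverse, and applying `t` to arguments all of which lie
in `B` except possibly one (arbitrary in `A`) lands in `B`. -/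
def AbsorbingWith (Alg : UAlgebra σ A) (B : Set A) {k : ℕ} (t : UTerm σ k) : Prop :=
  B.Nonempty ∧ Alg.IsSubuniv B ∧
  ∀ (j : Fin k) (x : Fin k → A), (∀ i, i ≠ j → x i ∈ B) → Alg.eval t x ∈ B

/-- `B ◁ A` : `B` is absorbing with respect to some term. -/
def Absorbing (Alg : UAlgebra σ A) (B : Set A) : Prop :=
  ∃ (k : ℕ) (t : UTerm σ k), Alg.AbsorbingWith B t

/-- `B ◁◁ A` : `B` is minimal among absorbing subuniverses of `A`. -/
def MinAbsorbing (Alg : UAlgebra σ A) (B : Set A) : Prop :=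
  Alg.Absorbing B ∧ ∀ C : Set A, Alg.Absorbing C → C ⊆ B → C = B

/-- A congruence of the subalgebra with universe `R`. -/
def IsCongOn (Alg : UAlgebra σ A) (R : Set A) (θ : A → A → Prop) : Prop :=
  (∀ a ∈ R, θ a a) ∧ (∀ a b, θ a b → θ b a) ∧ (∀ a b c, θ a b → θ b c → θ a c) ∧
  (∀ a b, θ a b → a ∈ R ∧ b ∈ R) ∧
  ∀ (f : σ.ops) (x y : Fin (σ.arity f) → A),
    (∀ j, θ (x j) (y j)) → θ (Alg.interp f x) (Alg.interp f y)

/-- The join of `θ₁` and `θ₂` in the congruence lattice of the subalgebra `R`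
is the top congruence `1_R`. -/
def JoinIsTop (Alg : UAlgebra σ A) (R : Set A) (θ₁ θ₂ : A → A → Prop) : Prop :=
  ∀ θ : A → A → Prop, Alg.IsCongOn R θ →
    (∀ a b, θ₁ a b → θ a b) → (∀ a b, θ₂ a b → θ a b) →
    ∀ a ∈ R, ∀ b ∈ R, θ a b

end UAlgebra

/-- Interpreting a `Fin 2`-indexed choice of the variables `x`, `y`. -/
def pick {A : Type} (x y : A) : Fin 2 → A := fun b => if b = 0 then x else y

/-- `t` is a common Taylor term for the family `Alg`: it is idempotent in every
algebra of the family, and for each coordinate `i` there is an identity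
`t(u_0,…,u_{n-1}) ≈ t(v_0,…,v_{n-1})` (each `u_j, v_j ∈ {x,y}`, `u_i = x`,
`v_i = y`) holding in every algebra of the family. -/
def IsTaylorFamily {σ : Signature} {ι : Type} {A : ι → Type}
    (Alg : ∀ i, UAlgebra σ (A i)) {n : ℕ} (t : UTerm σ n) : Prop :=
  ∃ u v : Fin n → Fin n → Fin 2,
    (∀ i : Fin n, u i i = 0 ∧ v i i = 1) ∧
    ∀ k : ι,
      (∀ a : A k, (Alg k).eval t (fun _ => a) = a) ∧
      ∀ (i : Fin n) (x y : A k),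
        (Alg k).eval t (fun j => pick x y (u i j)) =
        (Alg k).eval t (fun j => pick x y (v i j))

/-- Taylor term of a single algebra. -/
def IsTaylorFor {σ : Signature} {A : Type} (Alg : UAlgebra σ A) {n : ℕ}
    (t : UTerm σ n) : Prop :=
  IsTaylorFamily (fun _ : PUnit => Alg) t

/-- The product algebra of a family of algebras of a common signature. -/
def prodAlgebra {σ : Signature} {ι : Type} {A : ι → Type}
    (Alg : ∀ i, UAlgebra σ (A i)) : UAlgebra σ (∀ i, A i) :=
  ⟨fun f x i => (Alg i).interp f (fun j => x j i)⟩

/-- `R ≤_sd ∏ A_i` : `R` is a (nonempty) subuniverse of the product whose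
coordinate projections are all surjective. -/
def IsSubdirect {σ : Signature} {ι : Type} {A : ι → Type}
    (Alg : ∀ i, UAlgebra σ (A i)) (R : Set (∀ i, A i)) : Prop :=
  R.Nonempty ∧ (prodAlgebra Alg).IsSubuniv R ∧
  ∀ (i : ι) (a : A i), ∃ r ∈ R, r i = a

/-- The kernel `η_s` of the projection of `R` onto the coordinates in `s`,
as a relation (congruence of the subalgebra `R`). -/
def projKer {ι : Type} {A : ι → Type} (R : Set (∀ i, A i)) (s : Set ι) :
    (∀ i, A i) → (∀ i, A i) → Prop :=
  fun x y => x ∈ R ∧ y ∈ R ∧ ∀ i ∈ s, x i = y i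

/-- The kernels of the `i`-th and `j`-th coordinate projections of `R` coincide. -/
def kerEq {ι : Type} {A : ι → Type} (R : Set (∀ i, A i)) (i j : ι) : Prop :=
  ∀ x ∈ R, ∀ y ∈ R, (x i = y i ↔ x j = y j)
/-- A cube term: a `k`-ary idempotent term such that for each coordinate `i`
there is an identity `t(x_1,…,x_k) ≈ y` with each `x_j ∈ {x,y}` and `x_i = x`. -/
def IsCubeTerm {σ : Signature} {A : Type} (Alg : UAlgebra σ A) {k : ℕ}
    (t : UTerm σ k) : Prop :=
  (∀ a : A, Alg.eval t (fun _ => a) = a) ∧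
  ∀ i : Fin k, ∃ u : Fin k → Fin 2, u i = 0 ∧
    ∀ x y : A, Alg.eval t (fun j => pick x y (u j)) = y

/-- A term operation depends on its `j`-th argument. -/
def TermDependsOn {σ : Signature} {A : Type} (Alg : UAlgebra σ A) {k : ℕ}
    (t : UTerm σ k) (j : Fin k) : Prop :=
  ∃ (c : Fin k → A) (x y : A),
    Alg.eval t (Function.update c j x) ≠ Alg.eval t (Function.update c j y)

/-- `s` is a sink for `A`: every term operation depending on its `j`-th argument
returns `s` whenever `s` is placed in position `j`. -/
def IsSink {σ : Signature} {A : Type} (Alg : UAlgebra σ A) (s : A) : Prop :=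
  ∀ (k : ℕ) (t : UTerm σ k) (j : Fin k), TermDependsOn Alg t j →
    ∀ c : Fin k → A, Alg.eval t (Function.update c j s) = s

/-- `C(β, γ; δ)` : `β` centralizes `γ` modulo `δ`. -/
def Centralizes {σ : Signature} {A : Type} (Alg : UAlgebra σ A)
    (β γ δ : A → A → Prop) : Prop :=
  ∀ (ℓ m : ℕ) (t : UTerm σ (ℓ + m)) (a b : Fin ℓ → A) (u v : Fin m → A),
    (∀ i, β (a i) (b i)) → (∀ i, γ (u i) (v i)) →
    (δ (Alg.eval t (Fin.append a u)) (Alg.eval t (Fin.append a v)) ↔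
      δ (Alg.eval t (Fin.append b u)) (Alg.eval t (Fin.append b v)))

/-- The join `θ₁ ∨ θ₂` in the congruence lattice of `Alg`: the least congruence
containing `θ₁` and `θ₂`. -/
def conJoin {σ : Signature} {A : Type} (Alg : UAlgebra σ A)
    (θ₁ θ₂ : A → A → Prop) : A → A → Prop :=
  fun x y => ∀ θ : A → A → Prop, Alg.IsCong θ →
    (∀ a b, θ₁ a b → θ a b) → (∀ a b, θ₂ a b → θ a b) → θ x y

/-- The setoid determined by a congruence. -/
def congSetoid {σ : Signature} {A : Type} {Alg : UAlgebra σ A}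
    {δ : A → A → Prop} (h : Alg.IsCong δ) : Setoid A :=
  ⟨δ, ⟨h.1, fun hab => h.2.1 _ _ hab, fun hab hbc => h.2.2.1 _ _ _ hab hbc⟩⟩

/-- The quotient algebra `A/δ` (of a congruence-induced setoid). -/
noncomputable def quotAlgebra {σ : Signature} {A : Type} (Alg : UAlgebra σ A) (s : Setoid A) :
    UAlgebra σ (Quotient s) :=
  ⟨fun f x => Quotient.mk s (Alg.interp f (fun j => (x j).out))⟩

/-- The image `β/δ` of a congruence `β` on the quotient `A/δ`. -/
def quotCong {A : Type} (s : Setoid A) (β : A → A → Prop) :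
    Quotient s → Quotient s → Prop :=
  fun x y => ∃ a b : A, Quotient.mk s a = x ∧ Quotient.mk s b = y ∧ β a b

/-- Row-major pairing of indices: `(i, j) ↦ i * m + j`. -/
def pairIdx {l m : ℕ} (i : Fin l) (j : Fin m) : Fin (l * m) :=
  ⟨i.val * m + j.val, by
    have h1 : i.val * m + j.val < i.val * m + m := Nat.add_lt_add_left j.isLt _
    have h2 : i.val * m + m = (i.val + 1) * m := (Nat.succ_mul i.val m).symm
    have h3 : (i.val + 1) * m ≤ l * m :=
      Nat.mul_le_mul_right m (Nat.succ_le_of_lt i.isLt)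
    omega⟩

/-- Simultaneous substitution into a term. -/
def UTerm.bind {σ : Signature} {n k : ℕ} : UTerm σ n → (Fin n → UTerm σ k) → UTerm σ k
  | .var i, s => s i
  | .app f ts, s => .app f (fun j => (ts j).bind s)

/-- The star composition `f ⋆ g` of terms: the `ℓm`-ary term
`(f ⋆ g)(a₁₁,…,a_{ℓm}) = f(g(a₁₁,…,a₁ₘ), …, g(a_{ℓ1},…,a_{ℓm}))`. -/
def starTerm {σ : Signature} {l m : ℕ} (f : UTerm σ l) (g : UTerm σ m) :
    UTerm σ (l * m) :=
  f.bind (fun i => g.bind (fun j => .var (pairIdx i j)))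

/-- Star composition on arity-indexed terms. -/
def sigStar {σ : Signature} (p q : Σ k, UTerm σ k) : Σ k, UTerm σ k :=
  ⟨p.1 * q.1, starTerm p.2 q.2⟩

/-- The left-associated iterated star `p ⋆ q₀ ⋆ q₁ ⋆ ⋯`. -/
def iterStar {σ : Signature} (p : Σ k, UTerm σ k) :
    List (Σ k, UTerm σ k) → Σ k, UTerm σ k
  | [] => p
  | q :: rest => iterStar (sigStar p q) rest

/-- `B` is an absorbing subuniverse of the subalgebra with universe `R`. -/
def AbsorbingIn {σ : Signature} {A : Type} (Alg : UAlgebra σ A) (R B : Set A) : Prop :=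
  B.Nonempty ∧ B ⊆ R ∧ Alg.IsSubuniv B ∧
  ∃ (k : ℕ) (t : UTerm σ k), ∀ (j : Fin k) (x : Fin k → A),
    (∀ i, i ≠ j → x i ∈ B) → x j ∈ R → Alg.eval t x ∈ B


/-!
On every nontrivial sink coordinate `ℓ` the Taylor term `t` depends on two distinct variables
`p ℓ ≠ p' ℓ`, and `s ℓ` absorbs both. In `T = t ⋆ t`, put `z` at the diagonal positions
`(p ℓ, p ℓ)` and `c` everywhere else: the resulting operation `G c z` preserves `R` and equals
`s ℓ` at a sink coordinate as soon as `c` or `z` does. This first produces `d ∈ R` that is `s` on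
all sink coordinates. By finiteness some power `(G d)^N` is idempotent, so `y = (G d)^N r`
satisfies `(G d)^N r = (G d)^N y`; on an abelian coordinate the term condition replaces `d` by `r`,
giving `(G r)^N y = (G r)^N r = r` there, while `(G r)^N y` is still `s` on the sink coordinates.
-/

open Function

theorem exists_pos_isIdempotentElem_pow {M : Type*} [Monoid M] [Finite M] (a : M) :
    ∃ N, 0 < N ∧ IsIdempotentElem (a ^ N) := by
  obtain ⟨i, j, hne, hij⟩ := Finite.exists_ne_map_eq_of_infinite (fun n : ℕ => a ^ n)
  wlog hlt : i < j generalizing i j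
  · exact this j i hne.symm hij.symm (hne.lt_or_gt.resolve_left hlt)
  obtain ⟨p, rfl⟩ : ∃ p, j = i + p := ⟨j - i, by omega⟩
  have hperiod : ∀ m, i ≤ m → ∀ c, a ^ (m + p * c) = a ^ m := by
    intro m hm c
    induction c with
    | zero => simp
    | succ c ih =>
      obtain ⟨e, rfl⟩ : ∃ e, m = e + i := ⟨m - i, by omega⟩
      calc a ^ (e + i + p * (c + 1)) = a ^ (e + p * c) * a ^ (i + p) := by
            rw [← pow_add]; ring_nf
        _ = a ^ (e + i + p * c) := by
            rw [← hij, ← pow_add]; ring_nf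
        _ = a ^ (e + i) := ih
  refine ⟨p * (i + 1), Nat.mul_pos (by omega) (by omega), ?_⟩
  rw [IsIdempotentElem, ← pow_add, hperiod _ (by nlinarith) (i + 1)]

theorem pairIdx_inj {l m : ℕ} {i i' : Fin l} {j j' : Fin m} :
    pairIdx i j = pairIdx i' j' ↔ i = i' ∧ j = j' := by
  have key : ∀ (a : Fin l) (b : Fin m), pairIdx a b = finProdFinEquiv (a, b) := fun a b =>
    Fin.ext (by simp only [pairIdx, finProdFinEquiv, Equiv.coe_fn_mk]; ring)
  rw [key, key, finProdFinEquiv.apply_eq_iff_eq, Prod.mk.injEq]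

namespace UTerm

variable {σ : Signature}

def iteratePiecewise {M : ℕ} (T : UTerm σ M) (S : Finset (Fin M)) : ℕ → UTerm σ 2
  | 0 => var 1
  | N + 1 => T.bind fun pos => if pos ∈ S then iteratePiecewise T S N else var 0

end UTerm

namespace UAlgebra

variable {σ : Signature} {A : Type} (Alg : UAlgebra σ A)

theorem eval_bind {n m : ℕ} (w : UTerm σ n) (sub : Fin n → UTerm σ m) (env : Fin m → A) :
    Alg.eval (w.bind sub) env = Alg.eval w fun i => Alg.eval (sub i) env := by
  induction w with
  | var i => rfl
  | app f ts ih => simp only [UTerm.bind, eval, ih]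

theorem eval_starTerm {l m : ℕ} (f : UTerm σ l) (g : UTerm σ m) (env : Fin (l * m) → A) :
    Alg.eval (starTerm f g) env = Alg.eval f fun i => Alg.eval g fun j => env (pairIdx i j) := by
  simp only [starTerm, eval_bind]
  rfl

theorem eval_mem {B : Set A} (hB : Alg.IsSubuniv B) {n : ℕ} (w : UTerm σ n)
    {env : Fin n → A} (henv : ∀ j, env j ∈ B) : Alg.eval w env ∈ B := by
  induction w with
  | var i => exact henv i
  | app f ts ih => exact hB f _ ih

theorem eval_congr_of_termDependsOn {m : ℕ} (w : UTerm σ m) {f g : Fin m → A}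
    (h : ∀ j, TermDependsOn Alg w j → f j = g j) : Alg.eval w f = Alg.eval w g := by
  classical
  suffices ∀ F : Finset (Fin m), ∀ f : Fin m → A, (∀ j ∉ F, f j = g j) →
      (∀ j, TermDependsOn Alg w j → f j = g j) → Alg.eval w f = Alg.eval w g from
    this Finset.univ f (by simp) h
  intro F
  induction F using Finset.induction_on with
  | empty => exact fun f hf _ => congrArg _ (funext fun j => hf j (Finset.notMem_empty j))
  | insert j F _ ih =>
    intro f hf hdep
    have hupdate : Alg.eval w f = Alg.eval w (update f j (g j)) := by
      by_cases hj : TermDependsOn Alg w j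
      · rw [← hdep j hj, update_eq_self]
      · by_contra hne
        exact hj ⟨f, f j, g j, by rwa [update_eq_self]⟩
    rw [hupdate]
    refine ih _ (fun j' hj' => ?_) (fun j' hj' => ?_) <;> by_cases hjj : j' = j
    · simp [hjj]
    · simpa [hjj] using hf j' (by simp [hjj, hj'])
    · simp [hjj]
    · simpa [hjj] using hdep j' hj'

def IsSinkAt {m : ℕ} (w : UTerm σ m) (s : A) (p : Fin m) : Prop :=
  ∀ c : Fin m → A, c p = s → Alg.eval w c = s

theorem isSinkAt_of_isSink {s : A} (hs : IsSink Alg s) {m : ℕ} {w : UTerm σ m} {p : Fin m}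
    (hp : TermDependsOn Alg w p) : Alg.IsSinkAt w s p := by
  intro c hc
  simpa [← hc] using hs m w p hp c

theorem isSinkAt_of_subsingleton [Subsingleton A] {m : ℕ} (w : UTerm σ m) (s : A) (p : Fin m) :
    Alg.IsSinkAt w s p :=
  fun _ _ => Subsingleton.elim _ _

variable {Alg} in
theorem IsSinkAt.starTerm {l m : ℕ} {f : UTerm σ l} {g : UTerm σ m} {s : A} {i : Fin l}
    {j : Fin m} (hf : Alg.IsSinkAt f s i) (hg : Alg.IsSinkAt g s j) :
    Alg.IsSinkAt (starTerm f g) s (pairIdx i j) := by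
  intro c hc
  rw [eval_starTerm]
  exact hf _ (hg _ hc)

def evalPiecewise {M : ℕ} (T : UTerm σ M) (S : Finset (Fin M)) (c z : A) : A :=
  Alg.eval T (S.piecewise (fun _ => z) (fun _ => c))

theorem evalPiecewise_mem {B : Set A} (hB : Alg.IsSubuniv B) {M : ℕ} (T : UTerm σ M)
    (S : Finset (Fin M)) {c z : A} (hc : c ∈ B) (hz : z ∈ B) : Alg.evalPiecewise T S c z ∈ B :=
  Alg.eval_mem hB T fun _ => S.piecewise_cases (fun _ => z) (fun _ => c) (· ∈ B) hz hc

theorem eval_iteratePiecewise {M : ℕ} (T : UTerm σ M) (S : Finset (Fin M)) (N : ℕ)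
    (env : Fin 2 → A) :
    Alg.eval (T.iteratePiecewise S N) env = (Alg.evalPiecewise T S (env 0))^[N] (env 1) := by
  induction N with
  | zero => rfl
  | succ N ih =>
    rw [iterate_succ_apply', ← ih, UTerm.iteratePiecewise, eval_bind, evalPiecewise]
    congr 1
    funext pos
    by_cases hpos : pos ∈ S <;> simp [hpos, eval]

variable {Alg} in
theorem Abelian.iterate_evalPiecewise_eq_self (hab : Alg.Abelian) {M : ℕ} {T : UTerm σ M}
    (hT : ∀ a, Alg.eval T (fun _ => a) = a) (S : Finset (Fin M)) {N : ℕ} {d r y : A}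
    (h : (Alg.evalPiecewise T S d)^[N] r = (Alg.evalPiecewise T S d)^[N] y) :
    (Alg.evalPiecewise T S r)^[N] y = r := by
  have hfix : Alg.evalPiecewise T S r r = r := by
    simpa only [evalPiecewise, Finset.piecewise_same] using hT r
  have habel := hab 1 1 (T.iteratePiecewise S N) (fun _ => d) (fun _ => r) (fun _ => r)
    (fun _ => y)
  have happ : ∀ a b : A, Fin.append (fun _ : Fin 1 => a) (fun _ : Fin 1 => b) 0 = a ∧
      Fin.append (fun _ : Fin 1 => a) (fun _ : Fin 1 => b) 1 = b := fun _ _ => ⟨rfl, rfl⟩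
  simp only [eval_iteratePiecewise, happ, iterate_fixed hfix] at habel
  exact (habel.mp h).symm

end UAlgebra

section Product

variable {σ : Signature} {ι : Type} {A : ι → Type} (Alg : ∀ i, UAlgebra σ (A i))

theorem prodAlgebra_eval_apply {n : ℕ} (w : UTerm σ n) (env : Fin n → ∀ i, A i) (i : ι) :
    (prodAlgebra Alg).eval w env i = (Alg i).eval w fun j => env j i := by
  induction w with
  | var j => rfl
  | app f ts ih => exact congrArg ((Alg i).interp f) (funext ih)

theorem prodAlgebra_iterate_evalPiecewise_apply {M : ℕ} (T : UTerm σ M) (S : Finset (Fin M))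
    (c z : ∀ i, A i) (N : ℕ) (i : ι) :
    ((prodAlgebra Alg).evalPiecewise T S c)^[N] z i =
      ((Alg i).evalPiecewise T S (c i))^[N] (z i) := by
  have hstep : Semiconj (fun z : ∀ i, A i => z i) ((prodAlgebra Alg).evalPiecewise T S c)
      ((Alg i).evalPiecewise T S (c i)) := fun z => by
    simp only [UAlgebra.evalPiecewise, prodAlgebra_eval_apply]
    congr 1
    funext pos
    by_cases hpos : pos ∈ S <;> simp [hpos]
  exact hstep.iterate_right N z

def SplitsSinks {M : ℕ} (T : UTerm σ M) (S : Finset (Fin M)) (K : Set ι) (s : ∀ i, A i) :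
    Prop :=
  ∀ ℓ ∈ K, ∃ q ∈ S, ∃ q' ∉ S, (Alg ℓ).IsSinkAt T (s ℓ) q ∧ (Alg ℓ).IsSinkAt T (s ℓ) q'

namespace SplitsSinks

variable {Alg} {M : ℕ} {T : UTerm σ M} {S : Finset (Fin M)} {K : Set ι} {s : ∀ i, A i}

theorem evalPiecewise_apply (h : SplitsSinks Alg T S K s) {ℓ : ι} (hℓ : ℓ ∈ K)
    {c z : ∀ i, A i} (hcz : c ℓ = s ℓ ∨ z ℓ = s ℓ) :
    (prodAlgebra Alg).evalPiecewise T S c z ℓ = s ℓ := by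
  obtain ⟨q, hq, q', hq', hsq, hsq'⟩ := h ℓ hℓ
  rw [UAlgebra.evalPiecewise, prodAlgebra_eval_apply]
  rcases hcz with hc | hz
  · exact hsq' _ (by simp [hq', hc])
  · exact hsq _ (by simp [hq, hz])

theorem exists_mem_eq_on [Finite ι] (h : SplitsSinks Alg T S K s) {R : Set (∀ i, A i)}
    (hR : IsSubdirect Alg R) : ∃ d ∈ R, ∀ ℓ ∈ K, d ℓ = s ℓ := by
  classical
  cases nonempty_fintype ι
  suffices ∀ F : Finset ι, ∃ d ∈ R, ∀ ℓ ∈ K, ℓ ∈ F → d ℓ = s ℓ by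
    obtain ⟨d, hd, hds⟩ := this Finset.univ
    exact ⟨d, hd, fun ℓ hℓ => hds ℓ hℓ (Finset.mem_univ ℓ)⟩
  intro F
  induction F using Finset.induction_on with
  | empty =>
    obtain ⟨d, hd⟩ := hR.1
    exact ⟨d, hd, fun ℓ _ hℓ => absurd hℓ (Finset.notMem_empty ℓ)⟩
  | insert m F _ ih =>
    obtain ⟨c, hc, hcs⟩ := ih
    obtain ⟨z, hz, hzs⟩ := hR.2.2 m (s m)
    refine ⟨_, UAlgebra.evalPiecewise_mem _ hR.2.1 T S hc hz, fun ℓ hℓ hℓF =>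
      h.evalPiecewise_apply hℓ ?_⟩
    rcases Finset.mem_insert.mp hℓF with rfl | hℓF
    · exact Or.inr hzs
    · exact Or.inl (hcs ℓ hℓ hℓF)

theorem mem_of_eq_off_of_eq_on [Finite ι] [∀ i, Finite (A i)] (h : SplitsSinks Alg T S K s)
    {R : Set (∀ i, A i)} (hR : IsSubdirect Alg R) (habel : ∀ i ∉ K, (Alg i).Abelian)
    (hT : ∀ i ∉ K, ∀ a : A i, (Alg i).eval T (fun _ => a) = a) {r x : ∀ i, A i} (hr : r ∈ R)
    (hxr : ∀ i ∉ K, x i = r i) (hxs : ∀ ℓ ∈ K, x ℓ = s ℓ) : x ∈ R := by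
  set G := (prodAlgebra Alg).evalPiecewise T S
  set D := {z ∈ R | ∀ ℓ ∈ K, z ℓ = s ℓ}
  have hmapsR : ∀ c ∈ R, Set.MapsTo (G c) R R := fun c hc z hz =>
    UAlgebra.evalPiecewise_mem _ hR.2.1 T S hc hz
  have hmapsD : ∀ c ∈ R, Set.MapsTo (G c) D D := fun c hc z hz =>
    ⟨hmapsR c hc hz.1, fun ℓ hℓ => h.evalPiecewise_apply hℓ (Or.inr (hz.2 ℓ hℓ))⟩
  obtain ⟨d, hdR, hds⟩ := h.exists_mem_eq_on hR
  have : Finite (Function.End (∀ i, A i)) := inferInstanceAs (Finite ((∀ i, A i) → ∀ i, A i))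
  obtain ⟨N, hN, hidem⟩ := exists_pos_isIdempotentElem_pow (M := Function.End (∀ i, A i)) (G d)
  have hGd : ∀ z, (G d)^[N] ((G d)^[N] z) = (G d)^[N] z := congrFun hidem
  set y := (G d)^[N] r
  have hyD : y ∈ D := by
    obtain ⟨N', rfl⟩ : ∃ N', N = N' + 1 := ⟨N - 1, by omega⟩
    have hy' : (G d)^[N'] r ∈ R := (hmapsR d hdR).iterate N' hr
    rw [show y = G d ((G d)^[N'] r) from iterate_succ_apply' _ _ _]
    exact ⟨hmapsR d hdR hy', fun ℓ hℓ => h.evalPiecewise_apply hℓ (Or.inl (hds ℓ hℓ))⟩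
  have hGy : (G r)^[N] y ∈ D := (hmapsD r hr).iterate N hyD
  convert hGy.1 using 1
  funext i
  by_cases hi : i ∈ K
  · rw [hxs i hi, hGy.2 i hi]
  · rw [hxr i hi, prodAlgebra_iterate_evalPiecewise_apply]
    refine ((habel i hi).iterate_evalPiecewise_eq_self (hT i hi) S (d := d i) ?_).symm
    rw [← prodAlgebra_iterate_evalPiecewise_apply, ← prodAlgebra_iterate_evalPiecewise_apply]
    exact congrFun (hGd r).symm i

end SplitsSinks

end Product

namespace IsTaylorFamily

variable {σ : Signature} {ι : Type} {A : ι → Type} {Alg : ∀ i, UAlgebra σ (A i)} {nt : ℕ}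
  {t : UTerm σ nt}

theorem eval_starTerm_self_const (ht : IsTaylorFamily Alg t) (i : ι) (a : A i) :
    (Alg i).eval (starTerm t t) (fun _ => a) = a := by
  obtain ⟨_, _, _, hTay⟩ := ht
  simp only [UAlgebra.eval_starTerm, (hTay i).1]

theorem exists_ne_termDependsOn (ht : IsTaylorFamily Alg t) (i : ι) [Nontrivial (A i)] :
    ∃ p p', p ≠ p' ∧ TermDependsOn (Alg i) t p ∧ TermDependsOn (Alg i) t p' := by
  obtain ⟨u, v, huv, hTay⟩ := ht
  obtain ⟨hid, hident⟩ := hTay i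
  obtain ⟨a, b, hab⟩ := exists_pair_ne (A i)
  obtain ⟨p, hp⟩ : ∃ p, TermDependsOn (Alg i) t p := by
    by_contra! hnone
    have hconst := (Alg i).eval_congr_of_termDependsOn t (f := fun _ => a) (g := fun _ => b)
      fun j hj => absurd hj (hnone j)
    exact hab (by rwa [hid, hid] at hconst)
  by_contra! honly
  have hproj : ∀ c, (Alg i).eval t c = c p := fun c => by
    calc (Alg i).eval t c = (Alg i).eval t (fun _ => c p) :=
          (Alg i).eval_congr_of_termDependsOn t fun j hj => by
            obtain rfl : j = p := by_contra fun hjp => honly j p hjp hj hp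
            rfl
      _ = c p := hid _
  have hpa := hident p a b
  simp only [hproj, pick, (huv p).1, (huv p).2] at hpa
  exact hab (by simpa using hpa)

theorem exists_splitsSinks [Finite ι] (ht : IsTaylorFamily Alg t) {K : Set ι} {s : ∀ i, A i}
    (hsink : ∀ ℓ ∈ K, IsSink (Alg ℓ) (s ℓ)) (hpos : ∃ p p' : Fin nt, p ≠ p') :
    ∃ S, SplitsSinks Alg (starTerm t t) S K s := by
  classical
  cases nonempty_fintype ι
  have hpairs : ∀ ℓ, ∃ p p' : Fin nt, p ≠ p' ∧
      (ℓ ∈ K → (Alg ℓ).IsSinkAt t (s ℓ) p ∧ (Alg ℓ).IsSinkAt t (s ℓ) p') := by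
    intro ℓ
    rcases subsingleton_or_nontrivial (A ℓ) with hA | hA
    · obtain ⟨p, p', hne⟩ := hpos
      exact ⟨p, p', hne, fun _ => ⟨(Alg ℓ).isSinkAt_of_subsingleton t _ p,
        (Alg ℓ).isSinkAt_of_subsingleton t _ p'⟩⟩
    · obtain ⟨p, p', hne, hp, hp'⟩ := ht.exists_ne_termDependsOn ℓ
      exact ⟨p, p', hne, fun hℓ => ⟨(Alg ℓ).isSinkAt_of_isSink (hsink ℓ hℓ) hp,
        (Alg ℓ).isSinkAt_of_isSink (hsink ℓ hℓ) hp'⟩⟩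
  choose p p' hne hsinkAt using hpairs
  refine ⟨Finset.univ.image fun ℓ => pairIdx (p ℓ) (p ℓ), fun ℓ hℓ =>
    ⟨_, Finset.mem_image_of_mem _ (Finset.mem_univ ℓ), pairIdx (p ℓ) (p' ℓ), ?_,
      (hsinkAt ℓ hℓ).1.starTerm (hsinkAt ℓ hℓ).1, (hsinkAt ℓ hℓ).1.starTerm (hsinkAt ℓ hℓ).2⟩⟩
  simp only [Finset.mem_image, Finset.mem_univ, true_and, not_exists]
  intro ℓ' heq
  obtain ⟨h1, h2⟩ := pairIdx_inj.mp heq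
  exact hne ℓ (h1.symm.trans h2)

end IsTaylorFamily

theorem abelian_sink_subset_general
    {σ : Signature} {n : ℕ} {A : Fin n → Type} [∀ i, Finite (A i)]
    (Alg : ∀ i, UAlgebra σ (A i))
    {nt : ℕ} (t : UTerm σ nt) (ht : IsTaylorFamily Alg t)
    (k : ℕ)
    (habel : ∀ i : Fin n, i.val < k → (Alg i).Abelian)
    (s : ∀ i, A i) (hsink : ∀ i : Fin n, k ≤ i.val → IsSink (Alg i) (s i))
    (R : Set (∀ i, A i)) (hR : IsSubdirect Alg R) :
    ∀ x : ∀ i, A i,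
      (∃ r ∈ R, ∀ i : Fin n, i.val < k → r i = x i) →
      (∀ i : Fin n, k ≤ i.val → x i = s i) → x ∈ R := by
  rintro x ⟨r, hr, hrx⟩ hxs
  by_cases hpos : ∃ p p' : Fin nt, p ≠ p'
  · obtain ⟨S, hS⟩ := ht.exists_splitsSinks (K := {i | k ≤ i.val}) hsink hpos
    exact hS.mem_of_eq_off_of_eq_on hR (fun i hi => habel i (not_le.mp hi))
      (fun i _ => ht.eval_starTerm_self_const i) hr (fun i hi => (hrx i (not_le.mp hi)).symm) hxs
  · have hA : ∀ i, Subsingleton (A i) := fun i => by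
      by_contra hi
      rw [not_subsingleton_iff_nontrivial] at hi
      obtain ⟨p, p', hne, -⟩ := ht.exists_ne_termDependsOn i
      exact hpos ⟨p, p', hne⟩
    rwa [Subsingleton.elim x r]

/-- Abelian factors below `k`, sinks from `k` on:
`Proj_{{0,…,k-1}} R × {s_k} × ⋯ × {s_{n-1}} ⊆ R`. -/
theorem abelian_sink_subset
    {σ : Signature} {n : ℕ} {A : Fin n → Type} [∀ i, Finite (A i)]
    (Alg : ∀ i, UAlgebra σ (A i))
    (hidem : ∀ i, (Alg i).Idempotent)
    {nt : ℕ} (t : UTerm σ nt) (ht : IsTaylorFamily Alg t)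
    (k : ℕ) (hk0 : 0 < k) (hkn : k < n)
    (habel : ∀ i : Fin n, i.val < k → (Alg i).Abelian)
    (s : ∀ i, A i) (hsink : ∀ i : Fin n, k ≤ i.val → IsSink (Alg i) (s i))
    (R : Set (∀ i, A i)) (hR : IsSubdirect Alg R) :
    ∀ x : ∀ i, A i,
      (∃ r ∈ R, ∀ i : Fin n, i.val < k → r i = x i) →
      (∀ i : Fin n, k ≤ i.val → x i = s i) → x ∈ R :=
  abelian_sink_subset_general Alg t ht k habel s hsink R hR
end

section
/- Let α_0, α_1, β be congruences of an algebra A and suppose α_0 ∧ β = δ = α_1 ∧ β for some congruence δ. Then C(α_0 ∨ α_1, β; δ). If, in addition, β ≤ α_0 ∨ α_1, then C(β, β; δ); consequently β/δ is an abelian congruence of A/δ, i.e. C(β/δ, β/δ; 0) holds in A/δ. -/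
/-!
The centralizer relation `(δ : β)` relates `x` and `y` when exchanging them in one variable of any
term never changes whether the values at `β`-related arguments are `δ`-related. It is a
congruence, and `C(α, β; δ)` holds as soon as `α ≤ (δ : β)`: exchange the `α`-related
coordinates one at a time. If `α ∧ β = δ`, then `α ≤ (δ : β)`, since the `α`-parts of the two
sides are `α`-related and their `β`-parts always hold. Hence both `αᵢ`, and so their join, lie
below `(δ : β)`. With `β ≤ α₀ ∨ α₁` this gives `C(β, β; δ)`, which passes to `A/δ` on
representatives.
-/

open Function

section Tuples

variable {ι α β : Type*}

theorem rel_apply_of_forall_update [Fintype ι] [DecidableEq ι] {R : α → α → Prop}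
    {r : β → β → Prop} (hr : Equivalence r) {F : (ι → α) → β}
    (hF : ∀ c i x y, R x y → r (F (update c i x)) (F (update c i y)))
    {a b : ι → α} (hab : ∀ i, R (a i) (b i)) : r (F a) (F b) := by
  suffices h : ∀ s : Finset ι, r (F a) (F (s.piecewise b a)) by
    simpa using h Finset.univ
  intro s
  induction s using Finset.induction_on with
  | empty => simpa using hr.refl (F a)
  | insert i s hi ih =>
    have hai : update (s.piecewise b a) i (a i) = s.piecewise b a := by
      rw [update_eq_self_iff, Finset.piecewise_eq_of_notMem _ _ _ hi]
    rw [Finset.piecewise_insert]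
    refine hr.trans ih ?_
    simpa only [hai] using hF (s.piecewise b a) i _ _ (hab i)

theorem Fin.update_append_castAdd {m n : ℕ} (u : Fin m → α) (e : Fin n → α) (k : Fin m)
    (z : α) : update (Fin.append u e) (Fin.castAdd n k) z = Fin.append (update u k z) e := by
  funext i
  refine Fin.addCases (fun i => ?_) (fun i => ?_) i
  · simp only [update_apply, Fin.append_left, (Fin.castAdd_injective m n).eq_iff]
  · have hik : Fin.natAdd m i ≠ Fin.castAdd n k := Fin.ne_of_val_ne (by simp; omega)
    simp only [update_apply, Fin.append_right, hik, if_false]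

theorem Fin.append_rel {m n : ℕ} {R : α → α → Prop} {u u' : Fin m → α} {e e' : Fin n → α}
    (hu : ∀ i, R (u i) (u' i)) (he : ∀ i, R (e i) (e' i)) :
    ∀ i, R (Fin.append u e i) (Fin.append u' e' i) :=
  Fin.addCases (fun i => by simpa using hu i) (fun i => by simpa using he i)

end Tuples

variable {σ : Signature} {A : Type}

theorem UTerm.eval_bind (Alg : UAlgebra σ A) {n k : ℕ} (t : UTerm σ n)
    (s : Fin n → UTerm σ k) (env : Fin k → A) :
    Alg.eval (t.bind s) env = Alg.eval t (fun i => Alg.eval (s i) env) := by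
  induction t with
  | var i => rfl
  | app f ts ih => exact congrArg (Alg.interp f) (funext ih)

/-- `t` with `x_k` replaced by `f(x_n, …, x_{n+a-1})`, whose argument `j` is then set back to
`x_k`. -/
def UTerm.plugOp {n : ℕ} (t : UTerm σ n) (k : Fin n) (f : σ.ops) (j : Fin (σ.arity f)) :
    UTerm σ (n + σ.arity f) :=
  t.bind fun i => if i = k then
    .app f fun j' => if j' = j then .var (Fin.castAdd _ k) else .var (Fin.natAdd n j')
  else .var (Fin.castAdd _ i)

theorem UTerm.eval_plugOp (Alg : UAlgebra σ A) {n : ℕ} (t : UTerm σ n) (k : Fin n)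
    (f : σ.ops) (j : Fin (σ.arity f)) (w : Fin n → A) (e : Fin (σ.arity f) → A) :
    Alg.eval (t.plugOp k f j) (Fin.append w e) =
      Alg.eval t (update w k (Alg.interp f (update e j (w k)))) := by
  rw [UTerm.plugOp, UTerm.eval_bind]
  congr 1
  funext i
  by_cases hi : i = k
  · subst hi
    simp only [if_true, update_self, UAlgebra.eval]
    congr 1
    funext j'
    by_cases hj : j' = j
    · subst hj; simp [UAlgebra.eval]
    · simp [hj, UAlgebra.eval]
  · simp [hi, UAlgebra.eval]

namespace UAlgebra.IsCong

variable {Alg : UAlgebra σ A} {θ : A → A → Prop}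

theorem equivalence (h : Alg.IsCong θ) : Equivalence θ :=
  ⟨h.1, h.2.1 _ _, h.2.2.1 _ _ _⟩

theorem eval (h : Alg.IsCong θ) {n : ℕ} (t : UTerm σ n) {c d : Fin n → A}
    (hcd : ∀ i, θ (c i) (d i)) : θ (Alg.eval t c) (Alg.eval t d) := by
  induction t with
  | var i => exact hcd i
  | app f ts ih => exact h.2.2.2 f _ _ ih

end UAlgebra.IsCong

def centralizerRel (Alg : UAlgebra σ A) (β δ : A → A → Prop) (x y : A) : Prop :=
  ∀ (n : ℕ) (t : UTerm σ n) (k : Fin n) (u v : Fin n → A), (∀ i, β (u i) (v i)) →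
    (δ (Alg.eval t (update u k x)) (Alg.eval t (update v k x)) ↔
      δ (Alg.eval t (update u k y)) (Alg.eval t (update v k y)))

section Centralizer

variable {Alg : UAlgebra σ A} {α β δ : A → A → Prop}

theorem centralizerRel_equivalence : Equivalence (centralizerRel Alg β δ) where
  refl _ _ _ _ _ _ _ := Iff.rfl
  symm h n t k u v huv := (h n t k u v huv).symm
  trans h h' n t k u v huv := (h n t k u v huv).trans (h' n t k u v huv)

theorem centralizerRel_interp_update (hβ : ∀ a, β a a) {x y : A}
    (hxy : centralizerRel Alg β δ x y) (f : σ.ops) (e : Fin (σ.arity f) → A)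
    (j : Fin (σ.arity f)) :
    centralizerRel Alg β δ (Alg.interp f (update e j x)) (Alg.interp f (update e j y)) := by
  intro n t k u v huv
  have key := hxy _ (t.plugOp k f j) (Fin.castAdd _ k) (Fin.append u e) (Fin.append v e)
    (Fin.append_rel huv fun _ => hβ _)
  simpa only [Fin.update_append_castAdd, UTerm.eval_plugOp, update_self, update_idem] using key

theorem isCong_centralizerRel (hβ : ∀ a, β a a) : Alg.IsCong (centralizerRel Alg β δ) := by
  have h : Equivalence (centralizerRel Alg β δ) := centralizerRel_equivalence
  exact ⟨h.refl, fun _ _ => h.symm, fun _ _ _ => h.trans, fun f _ _ hxy =>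
    rel_apply_of_forall_update h (fun c j _ _ h => centralizerRel_interp_update hβ h f c j) hxy⟩

theorem centralizes_of_le_centralizerRel (hβ : ∀ a, β a a)
    (hα : α ≤ centralizerRel Alg β δ) : Centralizes Alg α β δ := by
  intro ℓ m t a b u v hab huv
  refine rel_apply_of_forall_update (F := fun c =>
      δ (Alg.eval t (Fin.append c u)) (Alg.eval t (Fin.append c v)))
    ⟨Iff.refl, Iff.symm, Iff.trans⟩ (fun c i x y hxy => ?_) (fun i => hα _ _ (hab i))
  simpa only [Fin.update_append_castAdd] using hxy _ t (Fin.castAdd m i) (Fin.append c u)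
    (Fin.append c v) (Fin.append_rel (fun _ => hβ _) huv)

theorem le_centralizerRel_of_inf (hα : Alg.IsCong α) (hβ : Alg.IsCong β)
    (hδ : ∀ x y, δ x y ↔ α x y ∧ β x y) : α ≤ centralizerRel Alg β δ := by
  intro x y hxy n t k u v huv
  have hu : α (Alg.eval t (update u k x)) (Alg.eval t (update u k y)) :=
    hα.eval t fun i => by by_cases hi : i = k <;> simp [hi, hxy, hα.1]
  have hv : α (Alg.eval t (update v k x)) (Alg.eval t (update v k y)) :=
    hα.eval t fun i => by by_cases hi : i = k <;> simp [hi, hxy, hα.1]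
  have hβuv : ∀ z, β (Alg.eval t (update u k z)) (Alg.eval t (update v k z)) := fun z =>
    hβ.eval t fun i => by by_cases hi : i = k <;> simp [hi, huv, hβ.1]
  have hαeq := hα.equivalence
  simp only [hδ, hβuv, and_true]
  exact ⟨fun h => hαeq.trans (hαeq.trans (hαeq.symm hu) h) hv,
    fun h => hαeq.trans (hαeq.trans hu h) (hαeq.symm hv)⟩

theorem Centralizes.mono_left {α' : A → A → Prop} (h : Centralizes Alg α β δ) (hα : α' ≤ α) :
    Centralizes Alg α' β δ :=
  fun ℓ m t a b u v hab huv => h ℓ m t a b u v (fun i => hα _ _ (hab i)) huv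

end Centralizer

section Quotient

variable {Alg : UAlgebra σ A} {δ : A → A → Prop}

theorem quotAlgebra_eval (hδ : Alg.IsCong δ) {n : ℕ} (t : UTerm σ n)
    (env : Fin n → Quotient (congSetoid hδ)) :
    (quotAlgebra Alg (congSetoid hδ)).eval t env =
      Quotient.mk _ (Alg.eval t fun i => (env i).out) := by
  induction t with
  | var i => exact (Quotient.out_eq (env i)).symm
  | app f ts ih =>
    refine Quotient.sound (hδ.2.2.2 f _ _ fun j => ?_)
    simp only [ih j]
    exact Quotient.mk_out (s := congSetoid hδ) _

theorem out_rel_of_quotCong (hδ : Alg.IsCong δ) {α : A → A → Prop} (hα : Equivalence α)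
    (hδα : δ ≤ α) {p q : Quotient (congSetoid hδ)} (hpq : quotCong (congSetoid hδ) α p q) :
    α p.out q.out := by
  obtain ⟨x, y, rfl, rfl, hxy⟩ := hpq
  have hout : ∀ z, α (Quotient.mk (congSetoid hδ) z).out z :=
    fun z => hδα _ _ (Quotient.mk_out (s := congSetoid hδ) z)
  exact hα.trans (hout x) (hα.trans hxy (hα.symm (hout y)))

theorem Centralizes.quotient (hδ : Alg.IsCong δ) {α γ : A → A → Prop} (hα : Equivalence α)
    (hγ : Equivalence γ) (hδα : δ ≤ α) (hδγ : δ ≤ γ) (h : Centralizes Alg α γ δ) :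
    Centralizes (quotAlgebra Alg (congSetoid hδ))
      (quotCong (congSetoid hδ) α) (quotCong (congSetoid hδ) γ) Eq := by
  intro ℓ m t a b u v hab huv
  have hout : ∀ {k k'} (p : Fin k → Quotient (congSetoid hδ)) (q : Fin k' → _),
      (fun i => (Fin.append p q i).out) = Fin.append (fun i => (p i).out) fun i => (q i).out :=
    fun p q => funext (Fin.addCases (by simp) (by simp))
  simp only [quotAlgebra_eval, hout, Quotient.eq]
  exact h ℓ m t _ _ _ _ (fun i => out_rel_of_quotCong hδ hα hδα (hab i))
    fun i => out_rel_of_quotCong hδ hγ hδγ (huv i)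

end Quotient

/-- If `α₀ ∧ β = δ = α₁ ∧ β` then `C(α₀ ∨ α₁, β; δ)`; if moreover
`β ≤ α₀ ∨ α₁`, then `C(β, β; δ)` and `β/δ` is an abelian congruence of `A/δ`. -/
theorem common_meets
    {σ : Signature} {A : Type} (Alg : UAlgebra σ A)
    (a0 a1 β δ : A → A → Prop)
    (ha0 : Alg.IsCong a0) (ha1 : Alg.IsCong a1)
    (hβ : Alg.IsCong β) (hδ : Alg.IsCong δ)
    (hm0 : ∀ x y, δ x y ↔ a0 x y ∧ β x y)
    (hm1 : ∀ x y, δ x y ↔ a1 x y ∧ β x y) :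
    Centralizes Alg (conJoin Alg a0 a1) β δ ∧
    ((∀ x y, β x y → conJoin Alg a0 a1 x y) →
      Centralizes Alg β β δ ∧
      Centralizes (quotAlgebra Alg (congSetoid hδ))
        (quotCong (congSetoid hδ) β) (quotCong (congSetoid hδ) β) Eq) := by
  have hjoin : Centralizes Alg (conJoin Alg a0 a1) β δ :=
    centralizes_of_le_centralizerRel hβ.1 fun x y hxy =>
      hxy _ (isCong_centralizerRel hβ.1) (le_centralizerRel_of_inf ha0 hβ hm0)
        (le_centralizerRel_of_inf ha1 hβ hm1)
  refine ⟨hjoin, fun hβle => ?_⟩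
  have hββ : Centralizes Alg β β δ := hjoin.mono_left hβle
  have hδβ : δ ≤ β := fun x y h => ((hm0 x y).1 h).2
  exact ⟨hββ, hββ.quotient hδ hβ.equivalence hβ.equivalence hδβ hδβ⟩
end
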